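/- If N is a normal subgroup of a finite group G and gN is a real element of odd order in G/N, then there exists a real element h ∈ G of odd order with hN conjugate to gN in G/N. -/

import Mathlib

/-!
We show that every surjection `π : G →* Q` of finite groups lifts real elements of odd order;
this property is stable under composition, and we induct on `|G|`. Let `P` be a Sylow
`2`-subgroup of `N = ker π`. If `P` is not normal in `G`, the Frattini argument `G = N_G(P) N`
lets us restrict `π` to the proper subgroup `N_G(P)`. If `P = 1`, then `N` has odd order: for a
`2`-element `x` inverting `π g`, the map `w ↦ x w⁻¹ x⁻¹` is a permutation of `2`-power order of
the fiber `gN`, which has odd size, so it fixes some `w`; then `x` inverts `w`, and a suitable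
power of `w` has odd order and still lies in `gN`. Otherwise `Z(P)` is a nontrivial abelian
normal `2`-subgroup `K` of `G`, and `π` factors through `G/K`, which is handled by induction.
To lift through `K`, take `y` of odd order inverted modulo `K` by `c`: the elements `y` and
`c y⁻¹ c⁻¹` have the same odd order and lie in the same coset of `K`, so they are conjugate under
`K`, because the first cohomology of a cyclic group of odd order with coefficients in the abelian
`2`-group `K` vanishes.
-/

open Function Finset

section

variable {G Q : Type*} [Group G] [Group Q]

theorem conj_pow_odd_eq_inv {b a : G} (h : b * a * b⁻¹ = a⁻¹) {v : ℕ} (hv : Odd v) :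
    b ^ v * a * (b ^ v)⁻¹ = a⁻¹ := by
  obtain ⟨k, rfl⟩ := hv
  induction k with
  | zero => simpa using h
  | succ k ih =>
    calc b ^ (2 * (k + 1) + 1) * a * (b ^ (2 * (k + 1) + 1))⁻¹
        = b * (b * (b ^ (2 * k + 1) * a * (b ^ (2 * k + 1))⁻¹) * b⁻¹) * b⁻¹ := by group
      _ = a⁻¹ := by rw [ih, ← conj_inv, h, inv_inv, h]

theorem exists_pow_odd_orderOf_map_eq [Finite G] (π : G →* Q) (g : G)
    (hodd : Odd (orderOf (π g))) : ∃ e : ℕ, Odd (orderOf (g ^ e)) ∧ π (g ^ e) = π g := by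
  obtain ⟨a, r, hr, hg⟩ := Nat.exists_eq_two_pow_mul_odd (orderOf_pos g).ne'
  set M := orderOf (π g)
  have hM : 0 < M.totient := Nat.totient_pos.mpr hodd.pos
  -- `e = 2 ^ (a φ(M))` is divisible by the `2`-part `2 ^ a` of `orderOf g` and `≡ 1 [MOD M]`.
  refine ⟨2 ^ (a * M.totient), hr.of_dvd_nat (orderOf_dvd_of_pow_eq_one ?_), ?_⟩
  · rw [← pow_mul, ← orderOf_dvd_iff_pow_eq_one, hg]
    exact mul_dvd_mul_right (pow_dvd_pow 2 (Nat.le_mul_of_pos_right a hM)) r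
  · have h1 : 2 ^ (a * M.totient) ≡ 1 [MOD M] :=
      calc 2 ^ (a * M.totient) = (2 ^ M.totient) ^ a := by rw [← pow_mul, mul_comm]
        _ ≡ 1 ^ a [MOD M] := (Nat.ModEq.pow_totient (Nat.coprime_two_left.mpr hodd)).pow a
        _ = 1 := one_pow a
    rw [map_pow, pow_eq_pow_iff_modEq.mpr h1, pow_one]

theorem exists_two_pow_order_conj_map_eq_inv [Finite G] {π : G →* Q} (hπ : Surjective π) {q : Q}
    (hq : IsConj q q⁻¹) : ∃ (x : G) (k : ℕ), x ^ 2 ^ k = 1 ∧ π x * q * (π x)⁻¹ = q⁻¹ := by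
  obtain ⟨c, hc⟩ := isConj_iff.mp hq
  obtain ⟨c, rfl⟩ := hπ c
  obtain ⟨k, r, hr, hck⟩ := Nat.exists_eq_two_pow_mul_odd (orderOf_pos c).ne'
  refine ⟨c ^ r, k, ?_, ?_⟩
  · rw [← pow_mul, mul_comm, ← hck, pow_orderOf_eq_one]
  · rw [map_pow]
    exact conj_pow_odd_eq_inv hc hr

theorem exists_div_map_eq_of_prod_iterate_eq_one {A : Type*} [CommGroup A] [Finite A]
    (φ : A →* A) {c : A} {m : ℕ} (hm : m.Coprime (Nat.card A))
    (hc : ∏ k ∈ range m, φ^[k] c = 1) : ∃ a, a / φ a = c := by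
  set d : ℕ → A := fun j ↦ ∏ k ∈ range j, φ^[k] c
  have hd : ∀ j, φ (d j) = d (j + 1) / c := fun j ↦ by
    simp only [d, prod_range_succ', iterate_zero_apply, map_prod, iterate_succ_apply',
      mul_div_cancel_right]
  have hs : (∏ j ∈ range m, d j) / φ (∏ j ∈ range m, d j) = c ^ m := by
    have hshift : ∏ j ∈ range m, d (j + 1) = ∏ j ∈ range m, d j := by
      simpa [d, hc] using (prod_range_succ' d m).symm.trans (prod_range_succ d m)
    rw [map_prod, prod_congr rfl fun j _ ↦ hd j, prod_div_distrib, hshift, prod_const, card_range,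
      div_div_cancel]
  obtain ⟨k, hk⟩ := exists_pow_eq_self_of_coprime (hm.coprime_dvd_right (orderOf_dvd_natCard c))
  obtain ⟨a, ha⟩ := (MonoidHom.id A / φ).range.pow_mem ⟨_, hs⟩ k
  exact ⟨a, hk ▸ ha⟩

theorem exists_mem_conj_eq_of_coprime {K : Subgroup G} [K.Normal] [IsMulCommutative K] [Finite K]
    {y z : G} (hyz : y * z⁻¹ ∈ K) {m : ℕ} (hy : y ^ m = 1) (hz : z ^ m = 1)
    (hm : m.Coprime (Nat.card K)) : ∃ n ∈ K, n * z * n⁻¹ = y := by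
  let _ : CommGroup K := { mul_comm := mul_comm' }
  let φ : K →* K := (MulAut.conjNormal z).toMonoidHom
  have hφ : ∀ (k : ℕ) (a : K), ((φ^[k] a : K) : G) = z ^ k * a * (z ^ k)⁻¹ := by
    intro k a
    induction k with
    | zero => simp
    | succ k ih =>
      rw [iterate_succ_apply']
      change z * ((φ^[k] a : K) : G) * z⁻¹ = _
      rw [ih]
      group
  let c : K := ⟨y * z⁻¹, hyz⟩
  have hprod : ∀ j, ((∏ k ∈ range j, φ^[k] c : K) : G) = y ^ j * (z ^ j)⁻¹ := by
    intro j
    induction j with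
    | zero => simp
    | succ j ih =>
      rw [prod_range_succ, Subgroup.coe_mul, ih, hφ]
      simp only [c]
      group
  obtain ⟨a, ha⟩ := exists_div_map_eq_of_prod_iterate_eq_one φ hm
    (Subtype.ext (by rw [hprod, hy, hz]; simp))
  refine ⟨a, a.2, ?_⟩
  have hac : (a : G) * ((φ^[1] a : K) : G)⁻¹ = y * z⁻¹ := by
    simpa [div_eq_mul_inv] using congrArg Subtype.val ha
  rw [hφ, pow_one] at hac
  calc (a : G) * z * (a : G)⁻¹ = (a * (z * a * z⁻¹)⁻¹) * z := by group
    _ = y := by rw [hac]; group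

theorem Subgroup.card_lt_of_ne_top [Finite G] {H : Subgroup G} (hH : H ≠ ⊤) :
    Nat.card H < Nat.card G := by
  rw [← H.card_mul_index]
  exact lt_mul_of_one_lt_right Nat.card_pos (one_lt_index_of_ne_top hH)

theorem Subgroup.card_quotient_lt_of_ne_bot [Finite G] {K : Subgroup G} [K.Normal] (hK : K ≠ ⊥) :
    Nat.card (G ⧸ K) < Nat.card G := by
  rw [K.card_eq_card_quotient_mul_card_subgroup]
  exact lt_mul_of_one_lt_right Nat.card_pos (K.one_lt_card_iff_ne_bot.mpr hK)

theorem IsPGroup.exists_normal_isMulCommutative_le {p : ℕ} [Fact p.Prime] [Finite G]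
    {S : Subgroup G} [S.Normal] (hS : IsPGroup p S) (hSbot : S ≠ ⊥) :
    ∃ K : Subgroup G, K.Normal ∧ IsMulCommutative K ∧ IsPGroup p K ∧ K ≠ ⊥ ∧ K ≤ S := by
  have : Nontrivial S := (Subgroup.nontrivial_iff_ne_bot S).mpr hSbot
  refine ⟨(Subgroup.center S).map S.subtype, inferInstance, inferInstance,
    (hS.to_subgroup _).map _, ?_, Subgroup.map_subtype_le _⟩
  exact (Subgroup.map_eq_bot_iff_of_injective _ S.subtype_injective).not.mpr
    ((Subgroup.nontrivial_iff_ne_bot _).mp hS.center_nontrivial)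

theorem MonoidHom.surjective_comp_subtype_of_sup_ker_eq_top {π : G →* Q} (hπ : Surjective π)
    {H : Subgroup G} (hH : H ⊔ π.ker = ⊤) : Surjective (π.comp H.subtype) := fun q ↦ by
  obtain ⟨g, rfl⟩ := hπ q
  obtain ⟨h, hh, k, hk, rfl⟩ := Subgroup.mem_sup_of_normal_right.mp (hH ▸ Subgroup.mem_top g)
  exact ⟨⟨h, hh⟩, by simp [π.mem_ker.mp hk]⟩

def LiftsRealOddOrder (π : G →* Q) : Prop :=
  ∀ q : Q, IsConj q q⁻¹ → Odd (orderOf q) → ∃ g : G, IsConj g g⁻¹ ∧ Odd (orderOf g) ∧ π g = q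

theorem LiftsRealOddOrder.comp {R : Type*} [Group R] {π : Q →* R} {φ : G →* Q}
    (hπ : LiftsRealOddOrder π) (hφ : LiftsRealOddOrder φ) : LiftsRealOddOrder (π.comp φ) := by
  intro r hr ho
  obtain ⟨q, hq, hqo, rfl⟩ := hπ r hr ho
  obtain ⟨g, hg, hgo, rfl⟩ := hφ q hq hqo
  exact ⟨g, hg, hgo, rfl⟩

theorem LiftsRealOddOrder.of_comp {R : Type*} [Group R] {π : Q →* R} {φ : G →* Q}
    (h : LiftsRealOddOrder (π.comp φ)) : LiftsRealOddOrder π := by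
  intro r hr ho
  obtain ⟨g, hg, hgo, rfl⟩ := h r hr ho
  exact ⟨φ g, by simpa using φ.map_isConj hg, hgo.of_dvd_nat (orderOf_map_dvd φ g), rfl⟩

theorem exists_map_eq_conj_eq_inv_of_odd_card_ker [Finite G] (π : G →* Q) (g : G) {x : G} {k : ℕ}
    (hx : x ^ 2 ^ k = 1) (hxg : π x * π g * (π x)⁻¹ = (π g)⁻¹) (hodd : Odd (Nat.card π.ker)) :
    ∃ w, π w = π g ∧ x * w * x⁻¹ = w⁻¹ := by
  classical
  have := Fintype.ofFinite G
  let τ : Equiv.Perm G := (Equiv.inv G).trans (MulAut.conj x).toEquiv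
  have hτ : ∀ w : G, π (τ w) = π g ↔ π w = π g := fun w ↦ by
    change π (x * w⁻¹ * x⁻¹) = π g ↔ _
    rw [map_mul, map_mul, map_inv, map_inv]
    conv_lhs => rw [← inv_inv (π g), ← hxg, conj_inv]
    rw [mul_left_inj, mul_right_inj, inv_inj]
  have hτ2 : τ ^ 2 ^ (k + 1) = 1 := by
    have hsq : τ ^ 2 = MulAut.toPerm G (MulAut.conj (x ^ 2)) := by
      ext w
      rw [pow_two, Equiv.Perm.mul_apply]
      change x * (x * w⁻¹ * x⁻¹)⁻¹ * x⁻¹ = x ^ 2 * w * (x ^ 2)⁻¹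
      rw [pow_two]
      group
    rw [pow_succ, mul_comm, pow_mul, hsq, ← map_pow, ← map_pow, ← pow_mul, mul_comm, pow_mul, hx,
      one_pow, map_one, map_one]
  obtain ⟨⟨w, hw⟩, hfix⟩ := Equiv.Perm.exists_fixed_point_of_prime
    (α := {w : G // π w = π g}) (p := 2) (n := k + 1) (σ := τ.subtypePerm hτ)
    (by rw [← Nat.card_eq_fintype_card, ← even_iff_two_dvd, Nat.not_even_iff_odd]
        exact Nat.card_congr (π.fiberEquivKer g) ▸ hodd)
    (by ext w; simp [Equiv.Perm.subtypePerm_pow, hτ2])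
  have hxw : x * w⁻¹ * x⁻¹ = w := congrArg Subtype.val hfix
  exact ⟨w, hw, by rw [← inv_inv (x * w * x⁻¹), conj_inv, hxw]⟩

theorem liftsRealOddOrder_of_odd_card_ker [Finite G] {π : G →* Q} (hπ : Surjective π)
    (hN : Odd (Nat.card π.ker)) : LiftsRealOddOrder π := by
  intro q hq hodd
  obtain ⟨g, rfl⟩ := hπ q
  obtain ⟨x, k, hx, hxg⟩ := exists_two_pow_order_conj_map_eq_inv hπ hq
  obtain ⟨w, hw, hxw⟩ := exists_map_eq_conj_eq_inv_of_odd_card_ker π g hx hxg hN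
  obtain ⟨e, he, hew⟩ := exists_pow_odd_orderOf_map_eq π w (hw ▸ hodd)
  exact ⟨w ^ e, by simpa [inv_pow] using (isConj_iff.mpr ⟨x, hxw⟩).pow e, he, hew.trans hw⟩

theorem liftsRealOddOrder_mk'_of_isPGroup_two [Finite G] {K : Subgroup G} [K.Normal]
    [IsMulCommutative K] (hK : IsPGroup 2 K) : LiftsRealOddOrder (QuotientGroup.mk' K) := by
  intro q hq hodd
  obtain ⟨g, rfl⟩ := QuotientGroup.mk'_surjective K q
  obtain ⟨c, hc⟩ := isConj_iff.mp hq
  obtain ⟨c, rfl⟩ := QuotientGroup.mk'_surjective K c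
  obtain ⟨e, hy, hyg⟩ := exists_pow_odd_orderOf_map_eq _ g hodd
  set y := g ^ e
  set z := c * y⁻¹ * c⁻¹
  have hz : QuotientGroup.mk' K z = QuotientGroup.mk' K g := by
    simp only [z, map_mul, map_inv, hyg]
    rw [← conj_inv, hc, inv_inv]
  have hyz : y * z⁻¹ ∈ K := by
    rw [← QuotientGroup.ker_mk' K, MonoidHom.mem_ker, map_mul, map_inv, hyg, hz, mul_inv_cancel]
  obtain ⟨b, hb⟩ := IsPGroup.iff_card.mp hK
  obtain ⟨n, -, hn⟩ := exists_mem_conj_eq_of_coprime hyz (pow_orderOf_eq_one y)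
    (by rw [conj_pow, inv_pow, pow_orderOf_eq_one]; group)
    (hb ▸ Nat.Coprime.pow_right _ hy.coprime_two_right)
  refine ⟨y, (isConj_iff.mpr ⟨n * c, ?_⟩).symm, hy, hyg⟩
  calc n * c * y⁻¹ * (n * c)⁻¹ = n * z * n⁻¹ := by simp only [z]; group
    _ = y := hn

theorem liftsRealOddOrder_of_surjective [Finite G] {π : G →* Q} (hπ : Surjective π) :
    LiftsRealOddOrder π := by
  obtain ⟨n, hn⟩ : ∃ n, Nat.card G = n := ⟨_, rfl⟩
  induction n using Nat.strong_induction_on generalizing G with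
  | _ n ih =>
    have : Fact (Nat.Prime 2) := ⟨Nat.prime_two⟩
    obtain ⟨P⟩ : Nonempty (Sylow 2 π.ker) := inferInstance
    set S := (P : Subgroup π.ker).map π.ker.subtype
    by_cases hS : Subgroup.normalizer (S : Set G) ≠ ⊤
    · have hsurj := π.surjective_comp_subtype_of_sup_ker_eq_top hπ (Sylow.normalizer_sup_eq_top P)
      exact (ih _ (hn ▸ Subgroup.card_lt_of_ne_top hS) hsurj rfl).of_comp
    have : S.Normal := Subgroup.normalizer_eq_top_iff.mp (of_not_not hS)
    by_cases hSbot : S = ⊥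
    · refine liftsRealOddOrder_of_odd_card_ker hπ ?_
      have hP : (P : Subgroup π.ker) = ⊥ :=
        (Subgroup.map_eq_bot_iff_of_injective _ π.ker.subtype_injective).mp hSbot
      simpa [hP, Nat.odd_iff] using P.not_dvd_index
    obtain ⟨K, _, _, hK2, hKbot, hKS⟩ :=
      (P.2.map π.ker.subtype).exists_normal_isMulCommutative_le hSbot
    have hKker : K ≤ π.ker := hKS.trans (Subgroup.map_subtype_le _)
    have hsurj : Surjective (QuotientGroup.lift K π hKker) := fun q ↦ by
      obtain ⟨g, rfl⟩ := hπ q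
      exact ⟨g, rfl⟩
    exact QuotientGroup.lift_comp_mk' K π hKker ▸
      (ih _ (hn ▸ Subgroup.card_quotient_lt_of_ne_bot hKbot) hsurj rfl).comp
        (liftsRealOddOrder_mk'_of_isPGroup_two hK2)

end

/-- Real elements of odd order of `G/N` lift to real elements of odd order of `G`. -/
theorem stmt_4 (G : Type*) [Group G] [Finite G] (N : Subgroup G) [N.Normal] (g : G)
    (hreal : IsConj ((g : G ⧸ N)) ((g : G ⧸ N))⁻¹)
    (hodd : Odd (orderOf (g : G ⧸ N))) :
    ∃ h : G, IsConj h h⁻¹ ∧ Odd (orderOf h) ∧ IsConj ((h : G ⧸ N)) (g : G ⧸ N) := by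
  obtain ⟨h, hr, ho, hh⟩ :=
    liftsRealOddOrder_of_surjective (QuotientGroup.mk'_surjective N) _ hreal hodd
  exact ⟨h, hr, ho, hh ▸ IsConj.refl _⟩
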